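/- Let A ∈ ℝ^{n×n} be row-stochastic, c, p̄ ∈ ℝ^n nonnegative, and let p* = p*[A,c,p̄] be the unique minimizer over 𝒫_pr(c,p̄) = {p ∈ ℝ^n : 0 ≤ p ≤ p̄, p ≤ c + Aᵀp} of some (equivalently, any) decreasing function f : [0,p̄] → ℝ. Then p* is a clearing vector, i.e., p* = min(p̄, c + Aᵀp*) componentwise. -/

import Mathlib

open Matrix Finset

/-- The polytope `𝒫_pr(c, p̄)` of feasible payment vectors under the pro-rata rule:
`0 ≤ p ≤ p̄` and `p ≤ c + Aᵀp`. -/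
def FeasibleVec (n : ℕ) (A : Matrix (Fin n) (Fin n) ℝ) (c pbar p : Fin n → ℝ) : Prop :=
  (∀ i, 0 ≤ p i) ∧ (∀ i, p i ≤ pbar i) ∧ (∀ i, p i ≤ c i + Aᵀ.mulVec p i)

/-- A function `f : [0, p̄] → ℝ` is decreasing: `p ≤ q` with `p ≠ q` implies `f q < f p`. -/
def DecreasingOn (n : ℕ) (pbar : Fin n → ℝ) (f : (Fin n → ℝ) → ℝ) : Prop :=
  ∀ p q : Fin n → ℝ, (∀ i, 0 ≤ p i) → (∀ i, p i ≤ q i) → (∀ i, q i ≤ pbar i) →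
    p ≠ q → f q < f p

/-!
For feasible `p`, the clearing map `Φ(p) = min(p̄, c + Aᵀp)` satisfies `p ≤ Φ(p)`, and since
`Aᵀ ≥ 0` also `Φ(p) ≤ c + Aᵀp ≤ c + AᵀΦ(p)`, so `Φ(p)` is again feasible. A minimizer of a
strictly decreasing function is not strictly dominated by any feasible vector, hence `p* = Φ(p*)`.
-/

theorem Matrix.mulVec_mono_of_nonneg {m n R : Type*} [Fintype n] [Semiring R] [PartialOrder R]
    [IsOrderedRing R] {M : Matrix m n R} (hM : ∀ i j, 0 ≤ M i j) {u v : n → R} (huv : u ≤ v) :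
    M *ᵥ u ≤ M *ᵥ v :=
  fun i => dotProduct_le_dotProduct_of_nonneg_left huv (hM i)

def clearingMap {n : ℕ} (A : Matrix (Fin n) (Fin n) ℝ) (c pbar p : Fin n → ℝ) : Fin n → ℝ :=
  fun i => min (pbar i) (c i + (Aᵀ *ᵥ p) i)

section Feasible

variable {n : ℕ} {A : Matrix (Fin n) (Fin n) ℝ} {c pbar p : Fin n → ℝ}

theorem FeasibleVec.le_clearingMap (hp : FeasibleVec n A c pbar p) : p ≤ clearingMap A c pbar p :=
  fun i => le_min (hp.2.1 i) (hp.2.2 i)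

theorem feasibleVec_clearingMap (hA0 : ∀ i j, 0 ≤ A i j) (hp : FeasibleVec n A c pbar p) :
    FeasibleVec n A c pbar (clearingMap A c pbar p) := by
  have hle := hp.le_clearingMap
  have hmono : Aᵀ *ᵥ p ≤ Aᵀ *ᵥ clearingMap A c pbar p :=
    mulVec_mono_of_nonneg (fun i j => hA0 j i) hle
  refine ⟨fun i => (hp.1 i).trans (hle i), fun i => min_le_left _ _, fun i => ?_⟩
  calc clearingMap A c pbar p i ≤ c i + (Aᵀ *ᵥ p) i := min_le_right _ _
    _ ≤ c i + (Aᵀ *ᵥ clearingMap A c pbar p) i := by gcongr; exact hmono i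

theorem FeasibleVec.eq_of_le_of_isMin {f : (Fin n → ℝ) → ℝ} (hf : DecreasingOn n pbar f)
    (hp : FeasibleVec n A c pbar p) (hmin : ∀ q, FeasibleVec n A c pbar q → f p ≤ f q)
    {q : Fin n → ℝ} (hq : FeasibleVec n A c pbar q) (hpq : p ≤ q) : p = q := by
  by_contra hne
  exact (hmin q hq).not_gt (hf p q hp.1 hpq hq.2.1 hne)

end Feasible

theorem prorata_min_is_clearing_general (n : ℕ)
    (A : Matrix (Fin n) (Fin n) ℝ) (hA0 : ∀ i j, 0 ≤ A i j)
    (c pbar : Fin n → ℝ)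
    (f : (Fin n → ℝ) → ℝ) (hf : DecreasingOn n pbar f)
    (pstar : Fin n → ℝ) (hfeas : FeasibleVec n A c pbar pstar)
    (hmin : ∀ q, FeasibleVec n A c pbar q → f pstar ≤ f q) :
    ∀ i, pstar i = min (pbar i) (c i + Aᵀ.mulVec pstar i) :=
  congrFun <|
    hfeas.eq_of_le_of_isMin hf hmin (feasibleVec_clearingMap hA0 hfeas) hfeas.le_clearingMap

/-- The minimizer `p*` of a decreasing function over `𝒫_pr(c, p̄)` is a clearing vector:
`p* = min(p̄, c + Aᵀp*)` componentwise. -/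
theorem prorata_min_is_clearing (n : ℕ) (hn : 1 ≤ n)
    (A : Matrix (Fin n) (Fin n) ℝ) (hA0 : ∀ i j, 0 ≤ A i j) (hA1 : ∀ i, ∑ j, A i j = 1)
    (c pbar : Fin n → ℝ) (hc : ∀ i, 0 ≤ c i) (hpbar : ∀ i, 0 ≤ pbar i)
    (f : (Fin n → ℝ) → ℝ) (hf : DecreasingOn n pbar f)
    (pstar : Fin n → ℝ) (hfeas : FeasibleVec n A c pbar pstar)
    (hmin : ∀ q, FeasibleVec n A c pbar q → f pstar ≤ f q) :
    ∀ i, pstar i = min (pbar i) (c i + Aᵀ.mulVec pstar i) :=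
  prorata_min_is_clearing_general n A hA0 c pbar f hf pstar hfeas hmin
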